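/- arXiv:0706.0431 — 2 statements merged into one kernel-verified Lean document; each statement's English description precedes it below -/
import Mathlib

section
/- Let ℓ ≥ 1, β ≥ 1 and 0 ≤ k < ℓ be integers. Let A = {p_0 + m_1·p_1 + ⋯ + m_k·p_k : m_1,…,m_k ∈ ℕ} ⊆ ℕ^ℓ be a linear set whose periods p_1,…,p_k ∈ ℕ^ℓ are linearly independent over ℚ. Define F : ℕ^ℓ → ℕ^ℓ by F(n) = rep_ℓ(β^ℓ · val_ℓ(n)). If there exist indices 1 ≤ j_1 < j_2 < ⋯ < j_{k+1} ≤ ℓ and a sequence (x^{(m)})_{m ∈ ℕ} of elements of F(A) such that min(x^{(m)}_{j_1}, …, x^{(m)}_{j_{k+1}}) → ∞ as m → ∞, then the language {word(F(n)) : n ∈ A} is not regular. -/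
/-!
Suppose a DFA with `s` states accepts the language. Pumping any block `a_i^{c_i}` with
`c_i ≥ s` by a multiple of `s!` does not change the state reached, so starting from a point of
the escaping sequence, `F(A)` contains the `(k+1)`-dimensional grid `c + s! • t` along the
coordinates `j_1, …, j_{k+1}`. Since `β ≥ 1` we have `val_ℓ n ≤ val_ℓ (F n)`, and
`val_ℓ n ≤ val_ℓ n'` forces `|n| ≤ |n'|` because `C(|n|+ℓ-1, ℓ) ≤ val_ℓ n < C(|n|+ℓ, ℓ)`. Hence the
point of `A` above a grid point has coordinate sum, and so coefficients `m_1, …, m_k` (the periods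
being nonzero), linear in `|t|`. This injects the box `[0,B)^{k+1}` into a box of side `O(B)` in
`ℕ^k`, which is impossible for large `B`.
-/

/-- `valB ℓ n = Σ_{i=1}^{ℓ} C(n_i + ⋯ + n_ℓ + ℓ − i, ℓ − i + 1)` (0-based indexing). -/
def valB (ℓ : ℕ) (n : Fin ℓ → ℕ) : ℕ :=
  ∑ i : Fin ℓ,
    Nat.choose ((∑ j ∈ Finset.univ.filter (fun j => i ≤ j), n j) + (ℓ - 1 - (i : ℕ)))
      (ℓ - (i : ℕ))

/-- `repB ℓ` is the inverse of the bijection `valB ℓ`. -/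
noncomputable def repB (ℓ : ℕ) : ℕ → (Fin ℓ → ℕ) := Function.invFun (valB ℓ)

/-- The word `a_1^{n_1} a_2^{n_2} ⋯ a_ℓ^{n_ℓ}` over the alphabet `Fin ℓ`. -/
def wordB (ℓ : ℕ) (n : Fin ℓ → ℕ) : List (Fin ℓ) :=
  (List.ofFn (fun i : Fin ℓ => List.replicate (n i) i)).flatten

open Function Finset
open scoped Nat

theorem Nat.exists_choose_le_lt_choose_succ (k N : ℕ) :
    ∃ c, c.choose (k + 1) ≤ N ∧ N < (c + 1).choose (k + 1) := by
  have hex : ∃ c, N < (c + 1).choose (k + 1) := by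
    refine ⟨N + k, ?_⟩
    calc N < (N + 1).choose N := by simp [Nat.choose_succ_self_right]
      _ ≤ (N + k + 1).choose N := Nat.choose_le_choose _ (by omega)
      _ = (N + k + 1).choose (k + 1) := by
        rw [show N + k + 1 = N + (k + 1) by omega, Nat.choose_symm_add]
  refine ⟨Nat.find hex, ?_, Nat.find_spec hex⟩
  rcases h : Nat.find hex with _ | c
  · simp
  · exact not_lt.mp (Nat.find_min hex (by omega : c < Nat.find hex))

theorem valB_succ (ℓ : ℕ) (n : Fin (ℓ + 1) → ℕ) :
    valB (ℓ + 1) n = (∑ i, n i + ℓ).choose (ℓ + 1) + valB ℓ (Fin.tail n) := by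
  unfold valB
  rw [Fin.sum_univ_succ]
  congr 1
  · simp
  · refine Finset.sum_congr rfl fun i _ => ?_
    have : ∑ j ∈ univ.filter (fun j => i.succ ≤ j), n j =
        ∑ j ∈ univ.filter (fun j => i ≤ j), Fin.tail n j := by
      rw [Finset.sum_filter, Finset.sum_filter, Fin.sum_univ_succ]
      simp [Fin.succ_le_succ_iff, Fin.tail]
    rw [this, Fin.val_succ]
    congr 1 <;> omega

theorem choose_sum_le_valB_succ (ℓ : ℕ) (n : Fin (ℓ + 1) → ℕ) :
    (∑ i, n i + ℓ).choose (ℓ + 1) ≤ valB (ℓ + 1) n :=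
  valB_succ ℓ n ▸ Nat.le_add_right _ _

theorem valB_lt_choose_sum (ℓ : ℕ) (n : Fin ℓ → ℕ) : valB ℓ n < (∑ i, n i + ℓ).choose ℓ := by
  induction ℓ with
  | zero => simp [valB]
  | succ ℓ ih =>
    have htail : ∑ i, Fin.tail n i ≤ ∑ i, n i := by
      rw [Fin.sum_univ_succ n]
      exact Nat.le_add_left _ _
    calc valB (ℓ + 1) n
        < (∑ i, n i + ℓ).choose (ℓ + 1) + (∑ i, n i + ℓ).choose ℓ := by
          rw [valB_succ]
          exact Nat.add_lt_add_left ((ih _).trans_le (Nat.choose_le_choose _ (by omega))) _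
      _ = (∑ i, n i + (ℓ + 1)).choose (ℓ + 1) := by
          rw [← add_assoc, Nat.choose_succ_succ', add_comm]

theorem sum_le_sum_of_valB_le {ℓ : ℕ} {a b : Fin ℓ → ℕ} (h : valB ℓ a ≤ valB ℓ b) :
    ∑ i, a i ≤ ∑ i, b i := by
  cases ℓ with
  | zero => simp
  | succ ℓ =>
    by_contra! hlt
    have := (choose_sum_le_valB_succ ℓ a).trans_lt (h.trans_lt (valB_lt_choose_sum _ b))
    exact this.not_ge (Nat.choose_le_choose _ (by omega))

theorem valB_succ_surjective (ℓ : ℕ) : Surjective (valB (ℓ + 1)) := by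
  induction ℓ with
  | zero => exact fun N => ⟨fun _ => N, by simp [valB]⟩
  | succ ℓ ih =>
    intro N
    obtain ⟨c, hcN, hNc⟩ := Nat.exists_choose_le_lt_choose_succ (ℓ + 1) N
    have hsub : N - c.choose (ℓ + 1 + 1) < c.choose (ℓ + 1) := by
      rw [Nat.choose_succ_succ'] at hNc
      omega
    obtain ⟨n, hn⟩ := ih (N - c.choose (ℓ + 1 + 1))
    have hnc : ∑ i, n i + ℓ < c := by
      by_contra! hle
      exact ((choose_sum_le_valB_succ ℓ n).trans_lt (hn ▸ hsub)).not_ge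
        (Nat.choose_le_choose _ hle)
    refine ⟨Fin.cons (c - (ℓ + 1) - ∑ i, n i) n, ?_⟩
    rw [valB_succ, Fin.sum_cons, Fin.tail_cons, hn,
      show c - (ℓ + 1) - ∑ i, n i + ∑ i, n i + (ℓ + 1) = c by omega]
    omega

theorem valB_repB {ℓ : ℕ} (hℓ : 0 < ℓ) (X : ℕ) : valB ℓ (repB ℓ X) = X := by
  obtain ⟨ℓ, rfl⟩ := Nat.exists_eq_add_one.mpr hℓ
  exact rightInverse_invFun (valB_succ_surjective ℓ) X

theorem count_wordB (ℓ : ℕ) (n : Fin ℓ → ℕ) (i : Fin ℓ) : (wordB ℓ n).count i = n i := by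
  simp [wordB, List.count_flatten, List.map_ofFn, List.sum_ofFn, List.count_replicate]

theorem wordB_injective (ℓ : ℕ) : Injective (wordB ℓ) := fun m n h =>
  funext fun i => by rw [← count_wordB ℓ m i, ← count_wordB ℓ n i, h]

theorem Function.iterate_add_mul_factorial_card {α : Type*} [Fintype α] (f : α → α) {n : ℕ}
    (hn : Fintype.card α ≤ n) (t : ℕ) (x : α) :
    f^[n + t * (Fintype.card α)!] x = f^[n] x := by
  -- after `card α` steps the orbit is inside a cycle, whose length divides `(card α)!`
  obtain ⟨a, b, hab, heq⟩ := Fintype.exists_ne_map_eq_of_card_lt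
    (fun i : Fin (Fintype.card α + 1) => f^[i] x) (by simp)
  wlog hlt : a < b generalizing a b
  · exact this b a hab.symm heq.symm (lt_of_le_of_ne (not_lt.mp hlt) hab.symm)
  have hper : IsPeriodicPt f (b - a) (f^[a] x) := by
    rw [IsPeriodicPt, IsFixedPt, ← iterate_add_apply, Nat.sub_add_cancel hlt.le, ← heq]
  have hfact : IsPeriodicPt f (t * (Fintype.card α)!) (f^[n] x) := by
    have := (isPeriodicPt_factorial_card_of_mem_periodicPts
      (mk_mem_periodicPts (by omega) hper)).apply_iterate (n - a)
    rw [← iterate_add_apply, Nat.sub_add_cancel (by omega)] at this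
    exact this.const_mul t
  rw [add_comm, iterate_add_apply, hfact.eq]

theorem DFA.evalFrom_replicate {α σ : Type*} (M : DFA α σ) (s : σ) (a : α) (n : ℕ) :
    M.evalFrom s (List.replicate n a) = (M.step · a)^[n] s := by
  induction n generalizing s with
  | zero => rfl
  | succ n ih => rw [List.replicate_succ, evalFrom_cons, ih, iterate_succ_apply]

theorem DFA.evalFrom_flatten_ofFn_congr {α σ : Type*} (M : DFA α σ) {m : ℕ}
    {L L' : Fin m → List α} (h : ∀ i s, M.evalFrom s (L i) = M.evalFrom s (L' i)) (s : σ) :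
    M.evalFrom s (List.ofFn L).flatten = M.evalFrom s (List.ofFn L').flatten := by
  induction m generalizing s with
  | zero => rfl
  | succ m ih =>
    simp only [List.ofFn_succ, List.flatten_cons, evalFrom_of_append, h 0]
    exact ih (fun i => h i.succ) _

theorem exists_pumping_of_isRegular_image_wordB {ℓ : ℕ} {S : Set (Fin ℓ → ℕ)}
    (hS : Language.IsRegular (wordB ℓ '' S)) :
    ∃ N d, 0 < d ∧ ∀ c ∈ S, ∀ u : Fin ℓ → ℕ, (∀ i, u i ≠ 0 → N ≤ c i) →
      (fun i => c i + u i * d) ∈ S := by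
  obtain ⟨σ, _, M, hM⟩ := hS
  refine ⟨Fintype.card σ, (Fintype.card σ)!, Nat.factorial_pos _, fun c hc u hu => ?_⟩
  have hword : M.eval (wordB ℓ fun i => c i + u i * (Fintype.card σ)!) = M.eval (wordB ℓ c) := by
    refine M.evalFrom_flatten_ofFn_congr (fun i s => ?_) _
    rw [M.evalFrom_replicate, M.evalFrom_replicate]
    by_cases hi : u i = 0
    · simp [hi]
    · exact iterate_add_mul_factorial_card _ (hu i hi) _ _
  have hacc : wordB ℓ c ∈ M.accepts := hM ▸ Set.mem_image_of_mem _ hc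
  rw [DFA.mem_accepts, ← hword, ← DFA.mem_accepts, hM] at hacc
  exact (wordB_injective ℓ).mem_set_image.mp hacc

theorem exists_injective_grid_of_isRegular {ℓ : ℕ} {κ : Type*} [Fintype κ]
    {S : Set (Fin ℓ → ℕ)} (hS : Language.IsRegular (wordB ℓ '' S)) {j : κ → Fin ℓ}
    (hj : Injective j) (hlarge : ∀ N, ∃ c ∈ S, ∀ r, N ≤ c (j r)) :
    ∃ g : (κ → ℕ) → Fin ℓ → ℕ, Injective g ∧ (∀ t, g t ∈ S) ∧
      ∃ C, ∀ t, ∑ i, g t i ≤ C * (∑ r, t r + 1) := by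
  obtain ⟨N, d, hd, hpump⟩ := exists_pumping_of_isRegular_image_wordB hS
  obtain ⟨c, hc, hcN⟩ := hlarge N
  refine ⟨fun t i => c i + extend j t 0 i * d, fun t t' h => funext fun r => ?_,
    fun t => hpump c hc _ fun i hi => ?_, ∑ i, c i + d, fun t => ?_⟩
  · simpa [hj.extend_apply, hd.ne'] using congr_fun h (j r)
  · obtain ⟨r, rfl⟩ : ∃ r, j r = i := by
      by_contra hr
      exact hi (extend_apply' _ _ _ hr)
    exact hcN r
  · have hext : ∑ i, extend j t 0 i = ∑ r, t r := by
      simpa only [tsum_fintype] using tsum_extend_zero hj t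
    calc ∑ i, (c i + extend j t 0 i * d) = ∑ i, c i + (∑ r, t r) * d := by
          rw [sum_add_distrib, ← sum_mul, hext]
      _ ≤ (∑ i, c i + d) * (∑ r, t r + 1) := by ring_nf; omega

def linearSet {ι κ : Type*} [Fintype κ] (p0 : ι → ℕ) (p : κ → ι → ℕ) : Set (ι → ℕ) :=
  {n | ∃ m : κ → ℕ, n = fun i => p0 i + ∑ r, m r * p r i}

theorem coeff_le_sum_of_ne_zero {ι κ : Type*} [Fintype ι] [Fintype κ] (p0 : ι → ℕ)
    (p : κ → ι → ℕ) (m : κ → ℕ) {r : κ} (hr : p r ≠ 0) :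
    m r ≤ ∑ i, (p0 i + ∑ r', m r' * p r' i) := by
  obtain ⟨i, hi⟩ := Function.ne_iff.mp hr
  calc m r ≤ m r * p r i := Nat.le_mul_of_pos_right _ (Nat.pos_of_ne_zero hi)
    _ ≤ ∑ r', m r' * p r' i := single_le_sum (f := fun r' => m r' * p r' i)
          (fun _ _ => Nat.zero_le _) (mem_univ r)
    _ ≤ p0 i + ∑ r', m r' * p r' i := Nat.le_add_left _ _
    _ ≤ ∑ i, (p0 i + ∑ r', m r' * p r' i) :=
          single_le_sum (f := fun i => p0 i + ∑ r', m r' * p r' i)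
            (fun _ _ => Nat.zero_le _) (mem_univ i)

theorem not_injective_of_le_mul_sum_add_one {ι κ : Type*} [Fintype ι] [Fintype κ]
    (hcard : Fintype.card κ < Fintype.card ι) (f : (ι → ℕ) → κ → ℕ) (C : ℕ)
    (hf : ∀ t r, f t r ≤ C * (∑ i, t i + 1)) : ¬ Injective f := by
  classical
  intro hinj
  -- `f` maps the box of side `B` into one of side `K * B + 1`, forcing `B ≤ (K + 1) ^ card κ`
  set K := C * (Fintype.card ι + 1)
  set B := (K + 1) ^ Fintype.card κ + 1
  have hB : 0 < B := Nat.succ_pos _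
  have hmaps : Set.MapsTo f (Fintype.piFinset fun _ : ι => range B : Set (ι → ℕ))
      (Fintype.piFinset fun _ : κ => range (K * B + 1) : Set (κ → ℕ)) := by
    intro t ht
    simp only [mem_coe, Fintype.mem_piFinset, mem_range] at ht ⊢
    intro r
    have hsum : ∑ i, t i ≤ Fintype.card ι * B := by
      simpa using sum_le_sum fun i (_ : i ∈ univ) => (ht i).le
    calc f t r ≤ C * (∑ i, t i + 1) := hf t r
      _ ≤ C * (Fintype.card ι * B + B) := by gcongr; omega
      _ = K * B := by ring
      _ < K * B + 1 := Nat.lt_succ_self _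
  have hcount := card_le_card_of_injOn f hmaps hinj.injOn
  simp only [Fintype.card_piFinset, card_range, prod_const, card_univ] at hcount
  have hpow : B ^ (Fintype.card κ + 1) ≤ ((K + 1) ^ Fintype.card κ) * B ^ Fintype.card κ :=
    calc B ^ (Fintype.card κ + 1) ≤ B ^ Fintype.card ι := Nat.pow_le_pow_right (by omega) hcard
      _ ≤ (K * B + 1) ^ Fintype.card κ := hcount
      _ ≤ ((K + 1) * B) ^ Fintype.card κ := by gcongr; rw [add_mul, one_mul]; omega
      _ = (K + 1) ^ Fintype.card κ * B ^ Fintype.card κ := mul_pow _ _ _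
  rw [pow_succ, mul_comm] at hpow
  have := Nat.le_of_mul_le_mul_right hpow (by positivity)
  omega

theorem exists_notMem_image_linearSet_of_injective {ι κ τ : Type*} [Fintype ι] [Fintype κ]
    [Fintype τ] (hcard : Fintype.card κ < Fintype.card τ) (p0 : ι → ℕ) (p : κ → ι → ℕ)
    (hp : ∀ r, p r ≠ 0) (F : (ι → ℕ) → ι → ℕ) (hF : ∀ a, ∑ i, a i ≤ ∑ i, F a i)
    (g : (τ → ℕ) → ι → ℕ) (hg : Injective g) (C : ℕ)
    (hC : ∀ t, ∑ i, g t i ≤ C * (∑ r, t r + 1)) :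
    ∃ t, g t ∉ F '' linearSet p0 p := by
  by_contra! hmem
  choose m hm using fun t => show ∃ m : κ → ℕ, F (fun i => p0 i + ∑ r, m r * p r i) = g t by
    obtain ⟨_, ⟨m, rfl⟩, h⟩ := hmem t
    exact ⟨m, h⟩
  refine not_injective_of_le_mul_sum_add_one hcard m C (fun t r => ?_)
    (fun t t' h => hg (by rw [← hm t, ← hm t', h]))
  calc m t r ≤ ∑ i, (p0 i + ∑ r', m t r' * p r' i) := coeff_le_sum_of_ne_zero _ _ _ (hp r)
    _ ≤ ∑ i, g t i := hm t ▸ hF _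
    _ ≤ C * (∑ r, t r + 1) := hC t

theorem image_not_regular_of_escaping_sequence_general (ℓ β k : ℕ) (hℓ : 1 ≤ ℓ) (hβ : 1 ≤ β)
    (p0 : Fin ℓ → ℕ) (p : Fin k → Fin ℓ → ℕ)
    (hindep : LinearIndependent ℚ (fun r : Fin k => fun i : Fin ℓ => ((p r i : ℚ))))
    (A : Set (Fin ℓ → ℕ))
    (hA : A = {n | ∃ m : Fin k → ℕ, n = fun i => p0 i + ∑ r : Fin k, m r * p r i})
    (F : (Fin ℓ → ℕ) → (Fin ℓ → ℕ))
    (hF : F = fun n => repB ℓ (β ^ ℓ * valB ℓ n))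
    (j : Fin (k + 1) → Fin ℓ) (hj : StrictMono j)
    (x : ℕ → (Fin ℓ → ℕ)) (hx : ∀ m : ℕ, x m ∈ F '' A)
    (hesc : ∀ B : ℕ, ∃ M : ℕ, ∀ m ≥ M, ∀ r : Fin (k + 1), B ≤ x m (j r)) :
    ¬ Language.IsRegular {w : List (Fin ℓ) | ∃ n ∈ A, w = wordB ℓ (F n)} := by
  intro hreg
  have hlang : {w : List (Fin ℓ) | ∃ n ∈ A, w = wordB ℓ (F n)} = wordB ℓ '' (F '' A) := by
    ext w
    simp [eq_comm]
  obtain ⟨g, hg_inj, hg_mem, C, hC⟩ := exists_injective_grid_of_isRegular (hlang ▸ hreg)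
    hj.injective fun N => (hesc N).elim fun M hM => ⟨x M, hx M, hM M le_rfl⟩
  have hsum_le : ∀ a, ∑ i, a i ≤ ∑ i, F a i := fun a => sum_le_sum_of_valB_le <| by
    rw [hF, valB_repB hℓ]
    exact Nat.le_mul_of_pos_left _ (by positivity)
  have hp : ∀ r, p r ≠ 0 := fun r h => hindep.ne_zero r (by ext i; simp [h])
  obtain ⟨t, ht⟩ := exists_notMem_image_linearSet_of_injective (by simp) p0 p hp F hsum_le
    g hg_inj C hC
  subst hA
  exact ht (hg_mem t)

/-- If `A ⊆ ℕ^ℓ` is a `k`-dimensional linear set (`k < ℓ`) and the image of `A` under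
multiplication by `β^ℓ` (read on representations) contains a sequence whose minimum over
some `k+1` fixed coordinates tends to infinity, then the image of the corresponding
subset of `B_ℓ` under multiplication by `β^ℓ` is not regular. -/
theorem image_not_regular_of_escaping_sequence (ℓ β k : ℕ) (hℓ : 1 ≤ ℓ) (hβ : 1 ≤ β)
    (hk : k < ℓ) (p0 : Fin ℓ → ℕ) (p : Fin k → Fin ℓ → ℕ)
    (hindep : LinearIndependent ℚ (fun r : Fin k => fun i : Fin ℓ => ((p r i : ℚ))))
    (A : Set (Fin ℓ → ℕ))
    (hA : A = {n | ∃ m : Fin k → ℕ, n = fun i => p0 i + ∑ r : Fin k, m r * p r i})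
    (F : (Fin ℓ → ℕ) → (Fin ℓ → ℕ))
    (hF : F = fun n => repB ℓ (β ^ ℓ * valB ℓ n))
    (j : Fin (k + 1) → Fin ℓ) (hj : StrictMono j)
    (x : ℕ → (Fin ℓ → ℕ)) (hx : ∀ m : ℕ, x m ∈ F '' A)
    (hesc : ∀ B : ℕ, ∃ M : ℕ, ∀ m ≥ M, ∀ r : Fin (k + 1), B ≤ x m (j r)) :
    ¬ Language.IsRegular {w : List (Fin ℓ) | ∃ n ∈ A, w = wordB ℓ (F n)} :=
  image_not_regular_of_escaping_sequence_general ℓ β k hℓ hβ p0 p hindep A hA F hF j hj x hx hesc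
end

section
/- Let ℓ ≥ 1 and β ≥ 1 be integers such that every prime divisor of β is strictly greater than ℓ. Then for every integer u ≥ ℓ, C(u + β^ℓ, ℓ) ≡ C(u, ℓ) (mod β^ℓ). -/
/-!
Since `C(u, ℓ) = u (u-1) ⋯ (u-ℓ+1) / ℓ!`, it suffices that the falling factorial, a polynomial
in `u` with integer coefficients, takes congruent values at `u + m` and `u` modulo `m`, and that
`ℓ!` is invertible modulo `m = β^ℓ`: a common prime factor of `ℓ!` and `β` would be at most `ℓ`.
-/

namespace Nat

theorem descFactorial_add_modEq (u m k : ℕ) :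
    (u + m).descFactorial k ≡ u.descFactorial k [MOD m] := by
  refine (modEq_iff_dvd.mpr ?_).symm
  have h := Polynomial.sub_dvd_eval_sub ((u + m : ℕ) : ℤ) (u : ℤ) (descPochhammer ℤ k)
  rwa [descPochhammer_eval_eq_descFactorial, descPochhammer_eval_eq_descFactorial, Nat.cast_add,
    add_sub_cancel_left] at h

theorem choose_add_modEq_of_coprime {m k : ℕ} (hm : m.Coprime k !) (u : ℕ) :
    (u + m).choose k ≡ u.choose k [MOD m] := by
  have h := descFactorial_add_modEq u m k
  rw [descFactorial_eq_factorial_mul_choose, descFactorial_eq_factorial_mul_choose] at h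
  exact h.cancel_left_of_coprime hm

theorem coprime_factorial_of_forall_prime_dvd_lt {n k : ℕ}
    (h : ∀ p : ℕ, p.Prime → p ∣ n → k < p) : n.Coprime k ! :=
  coprime_of_dvd fun p hp hpn hpk => (h p hp hpn).not_ge (hp.dvd_factorial.mp hpk)

end Nat

theorem choose_add_pow_mod_general (ℓ β : ℕ)
    (hprime : ∀ p : ℕ, p.Prime → p ∣ β → ℓ < p) (u : ℕ) :
    Nat.choose (u + β ^ ℓ) ℓ ≡ Nat.choose u ℓ [MOD β ^ ℓ] :=
  Nat.choose_add_modEq_of_coprime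
    ((Nat.coprime_factorial_of_forall_prime_dvd_lt hprime).pow_left ℓ) u

/-- If every prime divisor of `β` is greater than `ℓ`, then
`C(u + β^ℓ, ℓ) ≡ C(u, ℓ) (mod β^ℓ)` for all `u ≥ ℓ`. -/
theorem choose_add_pow_mod (ℓ β : ℕ) (hℓ : 1 ≤ ℓ) (hβ : 1 ≤ β)
    (hprime : ∀ p : ℕ, p.Prime → p ∣ β → ℓ < p) (u : ℕ) (hu : ℓ ≤ u) :
    Nat.choose (u + β ^ ℓ) ℓ ≡ Nat.choose u ℓ [MOD β ^ ℓ] :=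
  choose_add_pow_mod_general ℓ β hprime u
end
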